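/- arXiv:2007.07251 — 4 statements merged into one kernel-verified Lean document; each statement's English description precedes it below -/
import Mathlib

section
/- Let (A, μ) be an associative algebra and r = Σᵢ uᵢ⊗vᵢ ∈ A⊗A a solution of the associative Yang–Baxter equation A(r) = Σᵢ,ⱼ (uᵢuⱼ⊗vⱼ⊗vᵢ − uᵢ⊗vᵢuⱼ⊗vⱼ + uᵢ⊗uⱼ⊗vⱼvᵢ) = 0. If r is antisymmetric (τ(r) = −r) or symmetric (τ(r) = r), then r satisfies the classical Yang–Baxter equation in the Lie algebra A⁻ (with bracket [x,y] = xy − yx): [[r,r]] = Σᵢ,ⱼ ([uⱼ,uᵢ]⊗vⱼ⊗vᵢ − uᵢ⊗[uⱼ,vᵢ]⊗vⱼ − uᵢ⊗uⱼ⊗[vⱼ,vᵢ]) = 0. -/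
/-!
The associative Yang–Baxter expression is quadratic in `r`: `A(r) = Φ (r ⊗ r)` for a linear map
`Φ : (A ⊗ A) ⊗ (A ⊗ A) → A ⊗ A ⊗ A`. Expanding the brackets gives, for every `r = Σᵢ uᵢ ⊗ vᵢ`
and without any associativity, `[[r, r]] = σ₁₃ (A (τ r)) - A r`. If `τ r = ± r` then `A (τ r) = A r = 0`.
-/

open TensorProduct

namespace TensorProduct

section SwapOneThree

variable (R M : Type*) [CommSemiring R] [AddCommMonoid M] [Module R M]

noncomputable def swapOneThree : M ⊗[R] (M ⊗[R] M) ≃ₗ[R] M ⊗[R] (M ⊗[R] M) :=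
  (leftComm R M M M).trans <| ((TensorProduct.comm R M M).lTensor M).trans (leftComm R M M M)

variable {R M}

@[simp]
theorem swapOneThree_tmul (x y z : M) :
    swapOneThree R M (x ⊗ₜ (y ⊗ₜ z)) = z ⊗ₜ (y ⊗ₜ x) := by
  simp [swapOneThree]

end SwapOneThree

section YangBaxter

variable (R A : Type*) [CommRing R] [NonUnitalNonAssocRing A] [Module R A]
  [SMulCommClass R A A] [IsScalarTower R A A]

noncomputable def associativeYangBaxter :
    (A ⊗[R] A) ⊗[R] (A ⊗[R] A) →ₗ[R] A ⊗[R] (A ⊗[R] A) :=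
  map (LinearMap.mul' R A) (TensorProduct.comm R A A).toLinearMap ∘ₗ
      (tensorTensorTensorComm R A A A A).toLinearMap
  - (TensorProduct.assoc R A A A).toLinearMap ∘ₗ
      (LinearMap.lTensor A (LinearMap.mul' R A)).rTensor A ∘ₗ
      (TensorProduct.assoc R A A A).toLinearMap.rTensor A ∘ₗ
      (TensorProduct.assoc R (A ⊗[R] A) A A).symm.toLinearMap
  + (TensorProduct.assoc R A A A).toLinearMap ∘ₗ
      map LinearMap.id (LinearMap.mul' R A ∘ₗ (TensorProduct.comm R A A).toLinearMap) ∘ₗ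
      (tensorTensorTensorComm R A A A A).toLinearMap

variable {R A}

@[simp]
theorem associativeYangBaxter_tmul (a b c d : A) :
    associativeYangBaxter R A ((a ⊗ₜ b) ⊗ₜ (c ⊗ₜ d)) =
      (a * c) ⊗ₜ (d ⊗ₜ b) - a ⊗ₜ ((b * c) ⊗ₜ d) + a ⊗ₜ (c ⊗ₜ (d * b)) := by
  simp [associativeYangBaxter]

theorem associativeYangBaxter_sum_tmul_sum {ι : Type*} [Fintype ι] (a b c d : ι → A) :
    associativeYangBaxter R A ((∑ i, a i ⊗ₜ[R] b i) ⊗ₜ (∑ j, c j ⊗ₜ[R] d j)) =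
      (∑ i, ∑ j, (a i * c j) ⊗ₜ[R] (d j ⊗ₜ[R] b i))
        - (∑ i, ∑ j, a i ⊗ₜ[R] ((b i * c j) ⊗ₜ[R] d j))
        + (∑ i, ∑ j, a i ⊗ₜ[R] (c j ⊗ₜ[R] (d j * b i))) := by
  rw [sum_tmul, map_sum]
  simp only [tmul_sum, map_sum, associativeYangBaxter_tmul, Finset.sum_add_distrib,
    Finset.sum_sub_distrib]

theorem associativeYangBaxter_comm_tmul_comm {r : A ⊗[R] A}
    (hr : TensorProduct.comm R A A r = r ∨ TensorProduct.comm R A A r = -r) :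
    associativeYangBaxter R A (TensorProduct.comm R A A r ⊗ₜ TensorProduct.comm R A A r) =
      associativeYangBaxter R A (r ⊗ₜ r) := by
  rcases hr with hr | hr <;> simp [hr, neg_tmul, tmul_neg]

theorem classicalYangBaxter_eq_swapOneThree_sub {ι : Type*} [Fintype ι] (u v : ι → A) :
    (∑ i, ∑ j, (u j * u i - u i * u j) ⊗ₜ[R] (v j ⊗ₜ[R] v i))
      - (∑ i, ∑ j, u i ⊗ₜ[R] ((u j * v i - v i * u j) ⊗ₜ[R] v j))
      - (∑ i, ∑ j, u i ⊗ₜ[R] (u j ⊗ₜ[R] (v j * v i - v i * v j))) =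
    swapOneThree R A (associativeYangBaxter R A
        (TensorProduct.comm R A A (∑ i, u i ⊗ₜ v i) ⊗ₜ TensorProduct.comm R A A (∑ i, u i ⊗ₜ v i)))
      - associativeYangBaxter R A ((∑ i, u i ⊗ₜ v i) ⊗ₜ (∑ i, u i ⊗ₜ v i)) := by
  simp only [map_sum, comm_tmul, associativeYangBaxter_sum_tmul_sum, map_add, map_sub,
    swapOneThree_tmul, sub_tmul, tmul_sub, Finset.sum_sub_distrib]
  rw [Finset.sum_comm (f := fun i j => u j ⊗ₜ[R] ((u i * v j) ⊗ₜ[R] v i))]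
  abel

end YangBaxter

end TensorProduct

/-- If `r = Σᵢ uᵢ⊗vᵢ` is a symmetric or antisymmetric solution of the associative
Yang–Baxter equation `A(r) = 0` in an associative algebra `A`, then `r` satisfies the
classical Yang–Baxter equation `[[r,r]] = 0` in the Lie algebra `A⁻`. -/
theorem aybe_to_cybe
    {k A : Type*} [Field k] [NonUnitalRing A] [Module k A]
    [SMulCommClass k A A] [IsScalarTower k A A]
    {ι : Type*} [Fintype ι] (u v : ι → A)
    (hsym : (TensorProduct.comm k A A) (∑ i, u i ⊗ₜ[k] v i) = ∑ i, u i ⊗ₜ[k] v i ∨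
      (TensorProduct.comm k A A) (∑ i, u i ⊗ₜ[k] v i) = -∑ i, u i ⊗ₜ[k] v i)
    (hAYBE : (∑ i, ∑ j, (u i * u j) ⊗ₜ[k] (v j ⊗ₜ[k] v i))
        - (∑ i, ∑ j, u i ⊗ₜ[k] ((v i * u j) ⊗ₜ[k] v j))
        + (∑ i, ∑ j, u i ⊗ₜ[k] (u j ⊗ₜ[k] (v j * v i))) = 0) :
    (∑ i, ∑ j, (u j * u i - u i * u j) ⊗ₜ[k] (v j ⊗ₜ[k] v i))
      - (∑ i, ∑ j, u i ⊗ₜ[k] ((u j * v i - v i * u j) ⊗ₜ[k] v j))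
      - (∑ i, ∑ j, u i ⊗ₜ[k] (u j ⊗ₜ[k] (v j * v i - v i * v j))) = 0 := by
  have hA : associativeYangBaxter k A ((∑ i, u i ⊗ₜ v i) ⊗ₜ (∑ i, u i ⊗ₜ v i)) = 0 := by
    rw [associativeYangBaxter_sum_tmul_sum, hAYBE]
  rw [classicalYangBaxter_eq_swapOneThree_sub, associativeYangBaxter_comm_tmul_comm hsym, hA,
    map_zero, sub_zero]
end

section
/- Let (A, μ) be an associative algebra and r ∈ A⊗A with Δ_r(a) = a·r − r·a as above. Then (Δ_r⊗id)∘Δ_r(a) − (id⊗Δ_r)∘Δ_r(a) = a·A(r) − A(r)·a for all a ∈ A, where A⊗A⊗A carries the bimodule structure a·(x⊗y⊗z) = ax⊗y⊗z, (x⊗y⊗z)·a = x⊗y⊗za, and A(r) = Σ uᵢuⱼ⊗vⱼ⊗vᵢ − Σ uᵢ⊗vᵢuⱼ⊗vⱼ + Σ uᵢ⊗uⱼ⊗vⱼvᵢ. Consequently Δ_r is coassociative if and only if a·A(r) = A(r)·a for all a ∈ A. -/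
open TensorProduct

namespace TensorProduct

variable (k : Type*) {A ι : Type*} [CommSemiring k] [NonUnitalRing A] [Module k A] [Fintype ι]

/-- `A(r)` of the associative Yang–Baxter equation, for `r = ∑ i, u i ⊗ₜ v i`. -/
def aybe (u v : ι → A) : (A ⊗[k] A) ⊗[k] A :=
  (∑ i, ∑ j, ((u i * u j) ⊗ₜ[k] v j) ⊗ₜ[k] v i)
    - (∑ i, ∑ j, (u i ⊗ₜ[k] (v i * u j)) ⊗ₜ[k] v j)
    + (∑ i, ∑ j, (u i ⊗ₜ[k] u j) ⊗ₜ[k] (v j * v i))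

variable {k} {u v : ι → A} {D : A →ₗ[k] A ⊗[k] A}

lemma map_mulLeft_sub_map_mulRight_sum_tmul [SMulCommClass k A A] [IsScalarTower k A A]
    (a : A) :
    map (LinearMap.mulLeft k a) LinearMap.id (∑ i, u i ⊗ₜ[k] v i) -
        map LinearMap.id (LinearMap.mulRight k a) (∑ i, u i ⊗ₜ[k] v i) =
      ∑ i, ((a * u i) ⊗ₜ[k] v i - u i ⊗ₜ[k] (v i * a)) := by
  simp [map_sum, Finset.sum_sub_distrib]

lemma map_id_apply_apply_eq_sum
    (hD : ∀ a, D a = ∑ i, ((a * u i) ⊗ₜ[k] v i - u i ⊗ₜ[k] (v i * a))) (a : A) :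
    map D LinearMap.id (D a) = ∑ i, ∑ j,
      ((((a * u i * u j) ⊗ₜ[k] v j) ⊗ₜ[k] v i - (u j ⊗ₜ[k] (v j * (a * u i))) ⊗ₜ[k] v i)
        - (((u i * u j) ⊗ₜ[k] v j) ⊗ₜ[k] (v i * a) - (u j ⊗ₜ[k] (v j * u i)) ⊗ₜ[k] (v i * a))) := by
  simp only [hD, map_sum, map_sub, map_tmul, LinearMap.id_coe, id_eq, sum_tmul, sub_tmul,
    ← Finset.sum_sub_distrib]

lemma assoc_symm_map_id_apply_apply_eq_sum
    (hD : ∀ a, D a = ∑ i, ((a * u i) ⊗ₜ[k] v i - u i ⊗ₜ[k] (v i * a))) (a : A) :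
    (TensorProduct.assoc k A A A).symm (map LinearMap.id D (D a)) = ∑ i, ∑ j,
      ((((a * u i) ⊗ₜ[k] (v i * u j)) ⊗ₜ[k] v j - ((a * u i) ⊗ₜ[k] u j) ⊗ₜ[k] (v j * v i))
        - ((u i ⊗ₜ[k] (v i * a * u j)) ⊗ₜ[k] v j - (u i ⊗ₜ[k] u j) ⊗ₜ[k] (v j * (v i * a)))) := by
  simp only [hD, map_sum, map_sub, map_tmul, LinearMap.id_coe, id_eq, tmul_sum, tmul_sub,
    assoc_symm_tmul, ← Finset.sum_sub_distrib]

lemma coassoc_defect_eq_aybe_commutator [SMulCommClass k A A] [IsScalarTower k A A]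
    (hD : ∀ a, D a = ∑ i, ((a * u i) ⊗ₜ[k] v i - u i ⊗ₜ[k] (v i * a))) (a : A) :
    map D LinearMap.id (D a) - (TensorProduct.assoc k A A A).symm (map LinearMap.id D (D a)) =
      map (map (LinearMap.mulLeft k a) LinearMap.id) LinearMap.id (aybe k u v) -
        map LinearMap.id (LinearMap.mulRight k a) (aybe k u v) := by
  rw [map_id_apply_apply_eq_sum hD, assoc_symm_map_id_apply_apply_eq_sum hD]
  simp only [aybe, map_add, map_sub, map_sum, map_tmul, LinearMap.mulLeft_apply,
    LinearMap.mulRight_apply, LinearMap.id_coe, id_eq, Finset.sum_sub_distrib, mul_assoc]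
  -- the cross terms `uⱼ ⊗ vⱼ a uᵢ ⊗ vᵢ` and `uⱼ ⊗ vⱼ uᵢ ⊗ vᵢ a` occur on both sides,
  -- with the summation indices swapped
  rw [Finset.sum_comm (f := fun i j => (u j ⊗ₜ[k] (v j * (a * u i))) ⊗ₜ[k] v i),
    Finset.sum_comm (f := fun i j => (u j ⊗ₜ[k] (v j * u i)) ⊗ₜ[k] (v i * a))]
  abel

end TensorProduct

/-- For `Δ_r(a) = a·r − r·a` with `r = Σᵢ uᵢ⊗vᵢ`:
`(Δ_r⊗id)Δ_r(a) − (id⊗Δ_r)Δ_r(a) = a·A(r) − A(r)·a`, and consequently `Δ_r` is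
coassociative iff `a·A(r) = A(r)·a` for all `a`. -/
theorem coassoc_defect_eq_aybe_defect
    {k A : Type*} [Field k] [NonUnitalRing A] [Module k A]
    [SMulCommClass k A A] [IsScalarTower k A A]
    {ι : Type*} [Fintype ι] (u v : ι → A)
    (D : A →ₗ[k] A ⊗[k] A)
    (hD : ∀ a, D a =
      TensorProduct.map (LinearMap.mulLeft k a) LinearMap.id (∑ i, u i ⊗ₜ[k] v i) -
        TensorProduct.map LinearMap.id (LinearMap.mulRight k a) (∑ i, u i ⊗ₜ[k] v i)) :
    (∀ a, TensorProduct.map D LinearMap.id (D a) -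
        (TensorProduct.assoc k A A A).symm (TensorProduct.map LinearMap.id D (D a))
      = TensorProduct.map (TensorProduct.map (LinearMap.mulLeft k a) LinearMap.id)
            LinearMap.id
            ((∑ i, ∑ j, ((u i * u j) ⊗ₜ[k] v j) ⊗ₜ[k] v i)
              - (∑ i, ∑ j, (u i ⊗ₜ[k] (v i * u j)) ⊗ₜ[k] v j)
              + (∑ i, ∑ j, (u i ⊗ₜ[k] u j) ⊗ₜ[k] (v j * v i)))
        - TensorProduct.map LinearMap.id (LinearMap.mulRight k a)
            ((∑ i, ∑ j, ((u i * u j) ⊗ₜ[k] v j) ⊗ₜ[k] v i)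
              - (∑ i, ∑ j, (u i ⊗ₜ[k] (v i * u j)) ⊗ₜ[k] v j)
              + (∑ i, ∑ j, (u i ⊗ₜ[k] u j) ⊗ₜ[k] (v j * v i))))
    ∧
    ((∀ a, TensorProduct.map D LinearMap.id (D a) =
        (TensorProduct.assoc k A A A).symm (TensorProduct.map LinearMap.id D (D a))) ↔
      (∀ a, TensorProduct.map (TensorProduct.map (LinearMap.mulLeft k a) LinearMap.id)
            LinearMap.id
            ((∑ i, ∑ j, ((u i * u j) ⊗ₜ[k] v j) ⊗ₜ[k] v i)
              - (∑ i, ∑ j, (u i ⊗ₜ[k] (v i * u j)) ⊗ₜ[k] v j)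
              + (∑ i, ∑ j, (u i ⊗ₜ[k] u j) ⊗ₜ[k] (v j * v i)))
        = TensorProduct.map LinearMap.id (LinearMap.mulRight k a)
            ((∑ i, ∑ j, ((u i * u j) ⊗ₜ[k] v j) ⊗ₜ[k] v i)
              - (∑ i, ∑ j, (u i ⊗ₜ[k] (v i * u j)) ⊗ₜ[k] v j)
              + (∑ i, ∑ j, (u i ⊗ₜ[k] u j) ⊗ₜ[k] (v j * v i))))) := by
  have hD' (a : A) : D a = ∑ i, ((a * u i) ⊗ₜ[k] v i - u i ⊗ₜ[k] (v i * a)) := by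
    rw [hD, map_mulLeft_sub_map_mulRight_sum_tmul]
  have defect := coassoc_defect_eq_aybe_commutator hD'
  exact ⟨defect, forall_congr' fun a => by rw [← sub_eq_zero, defect, sub_eq_zero]; rfl⟩
end

section
/- Let (A, μ) be an associative algebra and r ∈ A⊗A antisymmetric (τ(r) = −r). Define Δ_r(a) = a·r − r·a. Then the balanceator of (A, μ, Δ_r) vanishes: B(a,b) = 0 for all a, b ∈ A. -/
open TensorProduct

section
variable {k A : Type*} [Field k] [NonUnitalRing A] [Module k A]
  [SMulCommClass k A A] [IsScalarTower k A A]

/-- The coboundary comultiplication `Δ_r(a) = a·r − r·a`. -/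
noncomputable def coboundaryComul (k : Type*) [Field k] [NonUnitalRing A] [Module k A]
    [SMulCommClass k A A] [IsScalarTower k A A] (r : A ⊗[k] A) (a : A) : A ⊗[k] A :=
  TensorProduct.map (LinearMap.mulLeft k a) LinearMap.id r -
    TensorProduct.map LinearMap.id (LinearMap.mulRight k a) r

/-- The balanceator `B(a,b) = Σ ab₂⊗b₁ − Σ b₂⊗b₁a + Σ a₁⊗ba₂ − Σ a₁b⊗a₂` associated
with a comultiplication `Δ`. -/
noncomputable def balanceator (k : Type*) [Field k] [NonUnitalRing A] [Module k A]
    [SMulCommClass k A A] [IsScalarTower k A A]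
    (Δ : A → A ⊗[k] A) (a b : A) : A ⊗[k] A :=
  TensorProduct.map (LinearMap.mulLeft k a) LinearMap.id (TensorProduct.comm k A A (Δ b)) -
    TensorProduct.map LinearMap.id (LinearMap.mulRight k a) (TensorProduct.comm k A A (Δ b)) +
      TensorProduct.map LinearMap.id (LinearMap.mulLeft k b) (Δ a) -
        TensorProduct.map (LinearMap.mulRight k b) LinearMap.id (Δ a)

variable (k) in
noncomputable def outerCommutator (a : A) : A ⊗[k] A →ₗ[k] A ⊗[k] A :=
  TensorProduct.map (LinearMap.mulLeft k a) LinearMap.id -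
    TensorProduct.map LinearMap.id (LinearMap.mulRight k a)

variable (k) in
noncomputable def innerCommutator (b : A) : A ⊗[k] A →ₗ[k] A ⊗[k] A :=
  TensorProduct.map LinearMap.id (LinearMap.mulLeft k b) -
    TensorProduct.map (LinearMap.mulRight k b) LinearMap.id

@[simp]
lemma outerCommutator_tmul (a x y : A) :
    outerCommutator k a (x ⊗ₜ[k] y) = (a * x) ⊗ₜ y - x ⊗ₜ (y * a) :=
  rfl

@[simp]
lemma innerCommutator_tmul (b x y : A) :
    innerCommutator k b (x ⊗ₜ[k] y) = x ⊗ₜ (b * y) - (x * b) ⊗ₜ y :=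
  rfl

lemma coboundaryComul_eq_outerCommutator (r : A ⊗[k] A) (a : A) :
    coboundaryComul k r a = outerCommutator k a r :=
  rfl

lemma comm_outerCommutator (a : A) (t : A ⊗[k] A) :
    TensorProduct.comm k A A (outerCommutator k a t) =
      innerCommutator k a (TensorProduct.comm k A A t) := by
  induction t using TensorProduct.induction_on with
  | zero => simp
  | tmul x y => simp
  | add s t hs ht => simp only [map_add, hs, ht]

lemma outerCommutator_innerCommutator (a b : A) (t : A ⊗[k] A) :
    outerCommutator k a (innerCommutator k b t) = innerCommutator k b (outerCommutator k a t) := by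
  induction t using TensorProduct.induction_on with
  | zero => simp
  | tmul x y =>
    simp only [innerCommutator_tmul, outerCommutator_tmul, map_sub, mul_assoc]
    abel
  | add s t hs ht => simp only [map_add, hs, ht]

lemma balanceator_eq (Δ : A → A ⊗[k] A) (a b : A) :
    balanceator k Δ a b =
      outerCommutator k a (TensorProduct.comm k A A (Δ b)) + innerCommutator k b (Δ a) := by
  simp only [balanceator, outerCommutator, innerCommutator, LinearMap.sub_apply]
  abel

/-- Since `τ` turns the outer commutator into the inner one and the two commute, both halves of
`B(a,b)` are the same operator, applied to `τ r` and to `r`. -/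
lemma balanceator_coboundaryComul (r : A ⊗[k] A) (a b : A) :
    balanceator k (coboundaryComul k r) a b =
      innerCommutator k b (outerCommutator k a (r + TensorProduct.comm k A A r)) := by
  simp only [balanceator_eq, coboundaryComul_eq_outerCommutator, comm_outerCommutator,
    outerCommutator_innerCommutator, map_add, add_comm]

/-- If `r` is antisymmetric, the balanceator of `(A, μ, Δ_r)` vanishes. -/
theorem balanceator_coboundary_eq_zero
    (r : A ⊗[k] A) (hanti : TensorProduct.comm k A A r = -r) :
    ∀ a b : A, balanceator k (coboundaryComul k r) a b = 0 := by
  intro a b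
  rw [balanceator_coboundaryComul, hanti, add_neg_cancel, map_zero, map_zero]

end
end

section
/- For the algebra A = span{e₁, e₂} with e₁e₁ = e₁e₂ = 0, e₂e₁ = e₁, e₂e₂ = e₂ and r = e₂⊗e₁ − e₁⊗e₂, the coboundary comultiplication Δ_r(a) = a·r − r·a satisfies Δ_r(e₁) = e₁⊗e₁ and Δ_r(e₂) = e₂⊗e₁, and Δ_r is coassociative. -/
/-! Left multiplication by `a = (a₁, a₂)` is `a₂ • id` and `x·a = x₂ a`, so `a·r = a₂ r` and
`r·a = −e₁⊗a`; hence the coboundary collapses to `Δ_r(a) = a ⊗ e₁`. Any comultiplication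
`a ↦ a ⊗ c` is coassociative, both sides sending `a` to `a ⊗ c ⊗ c`. -/

open TensorProduct

/-- The multiplication of the algebra `e₁e₁ = e₁e₂ = 0`, `e₂e₁ = e₁`, `e₂e₂ = e₂`
on `k × k`, with `e₁ = (1,0)`, `e₂ = (0,1)`. -/
def mulA {k : Type*} [Field k] (p q : k × k) : k × k := (p.2 * q.1, p.2 * q.2)

/-- Left multiplication `x ↦ a·x` as a linear map. -/
def mulLa {k : Type*} [Field k] (a : k × k) : (k × k) →ₗ[k] (k × k) :=
  a.2 • LinearMap.id

/-- Right multiplication `x ↦ x·a` as a linear map. -/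
def mulRa {k : Type*} [Field k] (a : k × k) : (k × k) →ₗ[k] (k × k) :=
  (LinearMap.snd k k k).smulRight a

/-- `r = e₂⊗e₁ − e₁⊗e₂`. -/
noncomputable def rA (k : Type*) [Field k] : (k × k) ⊗[k] (k × k) :=
  ((0 : k), (1 : k)) ⊗ₜ[k] ((1 : k), (0 : k)) - ((1 : k), (0 : k)) ⊗ₜ[k] ((0 : k), (1 : k))

theorem coassoc_of_forall_eq_tmul_right {R M : Type*} [CommSemiring R] [AddCommMonoid M]
    [Module R M] (D : M →ₗ[R] M ⊗[R] M) (c : M) (hD : ∀ a, D a = a ⊗ₜ[R] c) (a : M) :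
    TensorProduct.map D LinearMap.id (D a) =
      (TensorProduct.assoc R M M M).symm (TensorProduct.map LinearMap.id D (D a)) := by
  rw [hD, map_tmul, map_tmul, hD, hD, assoc_symm_tmul]
  rfl

section

variable {k : Type*} [Field k]

theorem mulLa_apply (a x : k × k) : mulLa a x = mulA a x := by
  simp [mulLa, mulA, Prod.ext_iff, mul_comm]

theorem mulRa_apply (a x : k × k) : mulRa a x = mulA x a := by
  simp [mulRa, mulA, Prod.ext_iff, mul_comm]

theorem map_mulLa_id_rA (a : k × k) :
    TensorProduct.map (mulLa a) LinearMap.id (rA k) = a.2 • rA k := by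
  simp only [rA, mulLa, map_sub, map_tmul, LinearMap.smul_apply, LinearMap.id_coe, id_eq,
    smul_sub, smul_tmul']

theorem map_id_mulRa_rA (a : k × k) :
    TensorProduct.map LinearMap.id (mulRa a) (rA k) = -(((1 : k), (0 : k)) ⊗ₜ[k] a) := by
  simp [rA, mulRa]

theorem coboundary_rA_eq_tmul_e₁ (a : k × k) :
    TensorProduct.map (mulLa a) LinearMap.id (rA k) -
      TensorProduct.map LinearMap.id (mulRa a) (rA k) = a ⊗ₜ[k] ((1 : k), (0 : k)) := by
  obtain ⟨x, y⟩ := a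
  have hxy : ((x, y) : k × k) = x • ((1 : k), (0 : k)) + y • ((0 : k), (1 : k)) := by simp
  rw [map_mulLa_id_rA, map_id_mulRa_rA, rA]
  dsimp only
  rw [hxy]
  simp only [tmul_add, add_tmul, tmul_smul, ← smul_tmul']
  module

end

/-- The linear maps `mulLa`/`mulRa` really are multiplication by `a`, and the coboundary
comultiplication `Δ_r(a) = a·r − r·a` satisfies `Δ_r(e₁) = e₁⊗e₁`, `Δ_r(e₂) = e₂⊗e₁`,
and is coassociative. -/
theorem example_coboundary_comul (k : Type*) [Field k]
    (D : (k × k) →ₗ[k] (k × k) ⊗[k] (k × k))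
    (hD : ∀ a, D a = TensorProduct.map (mulLa a) LinearMap.id (rA k) -
      TensorProduct.map LinearMap.id (mulRa a) (rA k)) :
    (∀ a x : k × k, mulLa a x = mulA a x ∧ mulRa a x = mulA x a) ∧
    D ((1 : k), (0 : k)) = ((1 : k), (0 : k)) ⊗ₜ[k] ((1 : k), (0 : k)) ∧
    D ((0 : k), (1 : k)) = ((0 : k), (1 : k)) ⊗ₜ[k] ((1 : k), (0 : k)) ∧
    (∀ a, TensorProduct.map D LinearMap.id (D a) =
      (TensorProduct.assoc k (k × k) (k × k) (k × k)).symm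
        (TensorProduct.map LinearMap.id D (D a))) := by
  have hD_tmul : ∀ a, D a = a ⊗ₜ[k] ((1 : k), (0 : k)) := fun a =>
    (hD a).trans (coboundary_rA_eq_tmul_e₁ a)
  exact ⟨fun a x => ⟨mulLa_apply a x, mulRa_apply a x⟩, hD_tmul _, hD_tmul _,
    coassoc_of_forall_eq_tmul_right D _ hD_tmul⟩
end
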